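/- arXiv:2301.06095 — 2 statements merged into one kernel-verified Lean document; each statement's English description precedes it below -/
import Mathlib

section
/- Let f₁, f₂: ℝ → ℂ be smooth compactly supported functions with |f̂ᵢ(ξ)| = O(|ξ|^{-2}). Then for integers m, h ≥ 1, Σ_{μ mod m, μ ≠ 0} E_{f₁,h}(μ/m) E_{f₂,h}(μ/m) ≪_{f₁,f₂} m h^{-2} min{m³, h³}, where E_{f,h}(α) = Σ_{n ∈ ℤ} f(n/h) e(nα). -/
open scoped BigOperators Real FourierTransform

/-- `e(x) = exp(2πix)`. -/
noncomputable def e (x : ℝ) : ℂ := Complex.exp (2 * π * Complex.I * x)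

/-- `E_{f,h}(α) = Σ_{n ∈ ℤ} f(n/h) e(nα)`. -/
noncomputable def Efh (f : ℝ → ℂ) (h : ℕ) (α : ℝ) : ℂ :=
  ∑' n : ℤ, f ((n : ℝ) / h) * e ((n : ℝ) * α)

noncomputable def c₀ : ℝ := ∑' k : ℤ, |(k:ℝ)| ^ (-2:ℝ)

lemma c₀_nonneg : 0 ≤ c₀ := tsum_nonneg (fun k => by positivity)

lemma summable_c₀ : Summable (fun k : ℤ => |(k:ℝ)| ^ (-2:ℝ)) :=
  Real.summable_abs_int_rpow one_lt_two

lemma rpow_neg_two_eq {x : ℝ} (hx : 0 ≤ x) : x ^ (-2:ℝ) = (x ^ 2)⁻¹ := by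
  rw [Real.rpow_neg hx, show ((2:ℝ)) = ((2:ℕ):ℝ) by norm_num, Real.rpow_natCast]

lemma norm_e (x : ℝ) : ‖e x‖ = 1 := by
  rw [e, Complex.norm_exp]
  norm_num [Complex.mul_re]

lemma fourier_scale (f : ℝ → ℂ) (h : ℕ) (hh : 1 ≤ h) (α ξ : ℝ) :
    𝓕 (fun x => f (x / h) * e (x * α)) ξ = (h : ℝ) • 𝓕 f ((h : ℝ) * (ξ - α)) := by
  have h0 : (0:ℝ) < h := by exact_mod_cast hh
  rw [Real.fourier_real_eq, Real.fourier_real_eq]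
  have hpt : ∀ x : ℝ, 𝐞 (-(x * ξ)) • (f (x / h) * e (x * α))
      = (fun y : ℝ => 𝐞 (-(((h:ℝ) * y) * (ξ - α))) • f y) (x / h) := by
    intro x
    simp only [Circle.smul_def, Real.fourierChar_apply, e,
      mul_comm ((h:ℝ)) (x / (h:ℝ)), div_mul_cancel₀ _ h0.ne', smul_eq_mul]
    calc Complex.exp (((2:ℝ) * π * -(x * ξ) : ℝ) * Complex.I)
          * (f (x / (h:ℝ)) * Complex.exp (2 * (π:ℂ) * Complex.I * ((x * α : ℝ) : ℂ)))
        = Complex.exp (((2:ℝ) * π * -(x * ξ) : ℝ) * Complex.I)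
          * Complex.exp (2 * (π:ℂ) * Complex.I * ((x * α : ℝ) : ℂ)) * f (x / (h:ℝ)) := by ring
      _ = Complex.exp (((2:ℝ) * π * -(x * (ξ - α)) : ℝ) * Complex.I) * f (x / (h:ℝ)) := by
          rw [← Complex.exp_add]
          congr 1
          push_cast
          ring
  calc (∫ x : ℝ, 𝐞 (-(x * ξ)) • (f (x / h) * e (x * α)))
      = ∫ x : ℝ, (fun y : ℝ => 𝐞 (-(((h:ℝ) * y) * (ξ - α))) • f y) (x / (h:ℝ)) := by
        exact MeasureTheory.integral_congr_ae (Filter.Eventually.of_forall hpt)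
    _ = |(h:ℝ)| • ∫ y : ℝ, 𝐞 (-(((h:ℝ) * y) * (ξ - α))) • f y :=
        MeasureTheory.Measure.integral_comp_div
          (fun y => 𝐞 (-(((h:ℝ) * y) * (ξ - α))) • f y) (h:ℝ)
    _ = (h : ℝ) • ∫ y : ℝ, 𝐞 (-(y * ((h:ℝ) * (ξ - α)))) • f y := by
        rw [abs_of_pos h0]
        congr 1
        apply MeasureTheory.integral_congr_ae (Filter.Eventually.of_forall fun y => ?_)
        ring_nf

lemma poisson_bound (f : ℝ → ℂ) (hc : Continuous f) (hcs : HasCompactSupport f)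
    (C : ℝ) (hC : 0 ≤ C) (hd : ∀ ξ : ℝ, ξ ≠ 0 → ‖𝓕 f ξ‖ ≤ C * |ξ| ^ (-2:ℝ))
    (h : ℕ) (hh : 1 ≤ h) (α : ℝ) (hα0 : 0 < α) (hα1 : α < 1) :
    ‖Efh f h α‖ ≤ C * (3 + 4 * c₀) * (h:ℝ)⁻¹ * ((min α (1 - α)) ^ 2)⁻¹ := by
  have h0 : (0:ℝ) < h := by exact_mod_cast hh
  set δ : ℝ := min α (1 - α) with hδdef
  have hδ0 : 0 < δ := lt_min hα0 (by linarith)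
  have hδhalf : δ ≤ 1/2 := by
    by_cases hα : α ≤ 1/2
    · exact le_trans (min_le_left _ _) hα
    · exact le_trans (min_le_right _ _) (by linarith)
  set g : ℝ → ℂ := fun x => f (x / h) * e (x * α) with hgdef
  have gcont : Continuous g := by
    apply ((hc.comp (continuous_id.div_const ((h:ℝ)))).mul)
    exact Complex.continuous_exp.comp (by continuity)
  have gsupp : HasCompactSupport g := by
    have h1 : HasCompactSupport (f ∘ (fun x : ℝ => x * ((h:ℝ)⁻¹))) :=
      hcs.comp_homeomorph (Homeomorph.mulRight₀ ((h:ℝ)⁻¹) (by positivity))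
    have : g = (f ∘ (fun x : ℝ => x * ((h:ℝ)⁻¹))) * (fun x => e (x * α)) := by
      funext x; simp [hgdef, div_eq_mul_inv]
    rw [this]
    exact h1.mul_right
  set B : ℤ → ℝ := fun k =>
    C * (h:ℝ)⁻¹ * ((if k.natAbs ≤ 1 then (δ^2)⁻¹ else 0) + 4 * |(k:ℝ)| ^ (-2:ℝ)) with hBdef
  have hB : ∀ k : ℤ, ‖𝓕 g k‖ ≤ B k := by
    intro k
    rw [hgdef, fourier_scale f h hh α k]
    have hne : (h:ℝ) * ((k:ℝ) - α) ≠ 0 := by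
      apply mul_ne_zero h0.ne'
      rcases le_or_gt k 0 with hk | hk
      · have : (k:ℝ) ≤ 0 := by exact_mod_cast hk
        intro hcon; nlinarith [sub_eq_zero.mp hcon]
      · have : (1:ℝ) ≤ (k:ℝ) := by exact_mod_cast hk
        intro hcon; nlinarith [sub_eq_zero.mp hcon]
    rw [norm_smul, Real.norm_of_nonneg h0.le]
    calc (h:ℝ) * ‖𝓕 f ((h:ℝ) * ((k:ℝ) - α))‖
        ≤ (h:ℝ) * (C * |(h:ℝ) * ((k:ℝ) - α)| ^ (-2:ℝ)) := by
          exact mul_le_mul_of_nonneg_left (hd _ hne) h0.le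
      _ = C * (h:ℝ)⁻¹ * (|(k:ℝ) - α| ^ 2)⁻¹ := by
          have hk0 : ((k:ℝ) - α) ≠ 0 := fun hcon => hne (by rw [hcon, mul_zero])
          rw [rpow_neg_two_eq (abs_nonneg _), abs_mul, abs_of_pos h0, mul_pow, mul_inv]
          rw [sq_abs]
          field_simp
      _ ≤ B k := by
          apply mul_le_mul_of_nonneg_left _ (by positivity)
          have h1 : δ ≤ |(k:ℝ) - α| := by
            rcases le_or_gt k 0 with hk | hk
            · have hkr : (k:ℝ) ≤ 0 := by exact_mod_cast hk
              rw [abs_of_nonpos (by linarith)]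
              have := min_le_left α (1 - α)
              linarith
            · have hkr : (1:ℝ) ≤ (k:ℝ) := by exact_mod_cast hk
              rw [abs_of_nonneg (by linarith)]
              have := min_le_right α (1 - α)
              linarith
          by_cases hk : k.natAbs ≤ 1
          · simp only [hk, if_true]
            have : (|(k:ℝ) - α| ^ 2)⁻¹ ≤ (δ^2)⁻¹ := by
              apply inv_anti₀ (by positivity)
              exact pow_le_pow_left₀ hδ0.le h1 2
            have h4 : 0 ≤ 4 * |(k:ℝ)| ^ (-2:ℝ) := by positivity
            linarith
          · have hk2' : (2:ℤ) ≤ |k| := by rw [Int.abs_eq_natAbs]; omega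
            have hk2 : (2:ℝ) ≤ |(k:ℝ)| := by
              rw [← Int.cast_abs]; exact_mod_cast hk2'
            have hdist : |(k:ℝ)| / 2 ≤ |(k:ℝ) - α| := by
              rcases abs_cases (k:ℝ) with ⟨he1, he2⟩ | ⟨he1, he2⟩ <;>
                rcases abs_cases ((k:ℝ) - α) with ⟨hf1, hf2⟩ | ⟨hf1, hf2⟩ <;> linarith
            have hle : (|(k:ℝ) - α| ^ 2)⁻¹ ≤ ((|(k:ℝ)| / 2) ^ 2)⁻¹ := by
              apply inv_anti₀ (by positivity)
              exact pow_le_pow_left₀ (by positivity) hdist 2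
            have heq : ((|(k:ℝ)| / 2) ^ 2)⁻¹ = 4 * (|(k:ℝ)| ^ 2)⁻¹ := by
              rw [div_pow, inv_div]
              ring
            rw [if_neg hk, rpow_neg_two_eq (abs_nonneg _)]
            linarith
  have hvanish : ∀ k : ℤ, k ∉ ({-1, 0, 1} : Finset ℤ) →
      (if k.natAbs ≤ 1 then (δ^2)⁻¹ else 0) = 0 := by
    intro k hk
    rw [if_neg]
    intro hcon
    apply hk
    simp only [Finset.mem_insert, Finset.mem_singleton]
    omega
  have hBsummable : Summable B := by
    apply Summable.mul_left
    apply Summable.add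
    · exact summable_of_ne_finset_zero hvanish
    · exact summable_c₀.mul_left 4
  have hFsummable : Summable (fun k : ℤ => ‖𝓕 g k‖) :=
    Summable.of_nonneg_of_le (fun k => norm_nonneg _) hB hBsummable
  have hev : ∀ᶠ x in Filter.cocompact ℝ, g x = 0 := by
    filter_upwards [gsupp.compl_mem_cocompact] with x hx
    exact image_eq_zero_of_notMem_tsupport hx
  have hbigO : g =O[Filter.cocompact ℝ] fun x : ℝ => |x| ^ (-2:ℝ) := by
    rw [Asymptotics.isBigO_iff]
    refine ⟨1, ?_⟩
    filter_upwards [hev] with x hx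
    rw [hx]
    simp only [norm_zero, one_mul]
    positivity
  have pois := Real.tsum_eq_tsum_fourier_of_rpow_decay_of_summable gcont one_lt_two
      hbigO hFsummable.of_norm 0
  have hEfh : Efh f h α = ∑' k : ℤ, 𝓕 g k := by
    have l1 : Efh f h α = ∑' n : ℤ, g ((0:ℝ) + n) := by
      unfold Efh
      congr 1
      funext n
      rw [zero_add]
    rw [l1, pois]
    congr 1
    funext n
    rw [show ((0:ℝ) : UnitAddCircle) = 0 by norm_num, fourier_eval_zero, mul_one]
  rw [hEfh]
  have step1 : ‖∑' k : ℤ, 𝓕 g k‖ ≤ ∑' k : ℤ, B k :=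
    le_trans (norm_tsum_le_tsum_norm hFsummable) (Summable.tsum_le_tsum hB hFsummable hBsummable)
  have step2 : ∑' k : ℤ, B k = C * (h:ℝ)⁻¹ * (3 * (δ^2)⁻¹ + 4 * c₀) := by
    rw [hBdef]
    rw [tsum_mul_left]
    congr 1
    rw [Summable.tsum_add (summable_of_ne_finset_zero hvanish) (summable_c₀.mul_left 4)]
    congr 1
    · rw [tsum_eq_sum hvanish]
      norm_num
      ring
    · rw [tsum_mul_left, c₀]
  have hinv : 1 ≤ (δ^2)⁻¹ := by
    have h1 : δ^2 ≤ 1 := by nlinarith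
    have h2 : (0:ℝ) < δ^2 := by positivity
    calc (1:ℝ) = δ^2 * (δ^2)⁻¹ := (mul_inv_cancel₀ h2.ne').symm
      _ ≤ 1 * (δ^2)⁻¹ := mul_le_mul_of_nonneg_right h1 (by positivity)
      _ = (δ^2)⁻¹ := one_mul _
  calc ‖∑' k : ℤ, 𝓕 g k‖ ≤ C * (h:ℝ)⁻¹ * (3 * (δ^2)⁻¹ + 4 * c₀) := by
        rw [← step2]; exact step1
    _ ≤ C * (3 + 4 * c₀) * (h:ℝ)⁻¹ * ((δ^2)⁻¹) := by
        have hh0 : (0:ℝ) ≤ (h:ℝ)⁻¹ := by positivity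
        nlinarith [mul_nonneg (mul_nonneg hC hh0) c₀_nonneg,
          mul_nonneg (mul_nonneg (mul_nonneg hC hh0) c₀_nonneg) (sub_nonneg.mpr hinv)]

lemma trivial_bound (f : ℝ → ℂ) (hc : Continuous f) (hcs : HasCompactSupport f) :
    ∃ D : ℝ, 0 ≤ D ∧ ∀ (h : ℕ), 1 ≤ h → ∀ α : ℝ, ‖Efh f h α‖ ≤ D * h := by
  obtain ⟨M, hM⟩ := hc.bounded_above_of_compact_support hcs
  have hM0 : 0 ≤ M := le_trans (norm_nonneg _) (hM 0)
  obtain ⟨A, hA0, hA⟩ := hcs.isBounded.subset_closedBall_lt 0 0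
  refine ⟨M * (2 * A + 3), by positivity, fun h hh α => ?_⟩
  have h0 : (0:ℝ) < h := by exact_mod_cast hh
  set N : ℕ := ⌈A * h⌉₊ with hN
  have hvanish : ∀ n : ℤ, n ∉ Finset.Icc (-(N:ℤ)) (N:ℤ) →
      f ((n : ℝ) / h) * e ((n : ℝ) * α) = 0 := by
    intro n hn
    have h1 : (N:ℤ) < |n| := by
      simp only [Finset.mem_Icc, not_and_or, not_le] at hn
      have := le_abs_self n
      have := neg_abs_le n
      rcases hn with hn | hn <;> omega
    have h2 : A * h < |(n:ℝ)| := by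
      rw [← Int.cast_abs]
      calc A * h ≤ (N : ℝ) := Nat.le_ceil _
        _ < ((|n| : ℤ) : ℝ) := by exact_mod_cast h1
    have h3 : ((n:ℝ) / h) ∉ tsupport f := by
      intro hmem
      have := hA hmem
      rw [Metric.mem_closedBall, Real.dist_eq, sub_zero, abs_div, abs_of_pos h0] at this
      rw [div_le_iff₀ h0] at this
      linarith
    rw [image_eq_zero_of_notMem_tsupport h3, zero_mul]
  rw [Efh, tsum_eq_sum hvanish]
  calc ‖∑ n ∈ Finset.Icc (-(N:ℤ)) (N:ℤ), f ((n : ℝ) / h) * e ((n : ℝ) * α)‖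
      ≤ ∑ n ∈ Finset.Icc (-(N:ℤ)) (N:ℤ), ‖f ((n : ℝ) / h) * e ((n : ℝ) * α)‖ :=
        norm_sum_le _ _
    _ ≤ ∑ n ∈ Finset.Icc (-(N:ℤ)) (N:ℤ), M := by
        apply Finset.sum_le_sum
        intro n _
        rw [norm_mul, norm_e, mul_one]
        exact hM _
    _ = ((Finset.Icc (-(N:ℤ)) (N:ℤ)).card : ℝ) * M := by
        rw [Finset.sum_const, nsmul_eq_mul]
    _ ≤ (2 * (N:ℝ) + 1) * M := by
        apply mul_le_mul_of_nonneg_right _ hM0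
        rw [Int.card_Icc]
        have : ((N:ℤ) + 1 - -(N:ℤ)).toNat = 2 * N + 1 := by omega
        rw [this]
        push_cast
        linarith
    _ ≤ M * (2 * A + 3) * h := by
        have hNle : (N:ℝ) < A * h + 1 := Nat.ceil_lt_add_one (by positivity)
        have h1le : (1:ℝ) ≤ h := by exact_mod_cast hh
        nlinarith [mul_le_mul_of_nonneg_left hNle.le hM0,
          mul_nonneg hM0 (sub_nonneg.mpr h1le)]

lemma inv_pow4_le (x : ℝ) (hx : 1 ≤ x) :
    ((x+1)^4)⁻¹ ≤ (1/3)*(x^3)⁻¹ - (1/3)*((x+1)^3)⁻¹ := by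
  have hx0 : (0:ℝ) < x := by linarith
  have h2 : (0:ℝ) < x + 1 := by linarith
  have expand : (1/3)*(x^3)⁻¹ - (1/3)*((x+1)^3)⁻¹
      = (3*x^2+3*x+1) / (3 * (x^3 * (x+1)^3)) := by
    field_simp
    ring
  rw [expand, inv_eq_one_div, div_le_div_iff₀ (by positivity) (by positivity)]
  nlinarith [pow_pos h2 3, mul_pos (pow_pos h2 3) (by positivity : (0:ℝ) < 6*x^2+4*x+1)]

lemma telescope_sum (T N : ℕ) (hT : 1 ≤ T) :
    ∑ t ∈ Finset.Ico (T+1) N, (((t:ℝ))^4)⁻¹ ≤ (1/3) * ((T:ℝ)^3)⁻¹ := by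
  rcases le_or_gt N (T+1) with hN | hN
  · rw [Finset.Ico_eq_empty (by omega)]
    simp only [Finset.sum_empty]
    positivity
  rw [Finset.sum_Ico_eq_sum_range]
  have hstep : ∀ i ∈ Finset.range (N - (T+1)), (((T+1+i:ℕ):ℝ)^4)⁻¹ ≤
      (fun j : ℕ => (1/3) * (((T+j:ℕ):ℝ)^3)⁻¹) i - (fun j : ℕ => (1/3) * (((T+j:ℕ):ℝ)^3)⁻¹) (i+1) := by
    intro i _
    simp only
    have hx : (1:ℝ) ≤ ((T+i:ℕ):ℝ) := by
      have : 1 ≤ T + i := by omega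
      exact_mod_cast this
    have := inv_pow4_le ((T+i:ℕ):ℝ) hx
    have hcast1 : ((T+1+i:ℕ):ℝ) = ((T+i:ℕ):ℝ) + 1 := by push_cast; ring
    have hcast2 : ((T+(i+1):ℕ):ℝ) = ((T+i:ℕ):ℝ) + 1 := by push_cast; ring
    rw [hcast1, hcast2]
    linarith
  calc ∑ i ∈ Finset.range (N - (T+1)), (((T+1+i:ℕ):ℝ)^4)⁻¹
      ≤ ∑ i ∈ Finset.range (N - (T+1)),
        ((fun j : ℕ => (1/3) * (((T+j:ℕ):ℝ)^3)⁻¹) i - (fun j : ℕ => (1/3) * (((T+j:ℕ):ℝ)^3)⁻¹) (i+1)) :=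
        Finset.sum_le_sum hstep
    _ = (1/3) * (((T+0:ℕ):ℝ)^3)⁻¹ - (1/3) * (((T+(N-(T+1)):ℕ):ℝ)^3)⁻¹ :=
        Finset.sum_range_sub' _ _
    _ ≤ (1/3) * ((T:ℝ)^3)⁻¹ := by
        simp only [Nat.add_zero]
        have : (0:ℝ) ≤ (1/3) * (((T+(N-(T+1)):ℕ):ℝ)^3)⁻¹ := by positivity
        linarith

lemma sum_inv_pow4_le (m : ℕ) : ∑ t ∈ Finset.Ico 1 m, (((t:ℝ))^4)⁻¹ ≤ 4/3 := by
  rcases le_or_gt m 1 with hm | hm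
  · rw [Finset.Ico_eq_empty (by omega)]
    norm_num
  · rw [Finset.sum_eq_sum_Ico_succ_bot hm]
    have := telescope_sum 1 m le_rfl
    norm_num at this ⊢
    linarith

lemma sum_reflect (m : ℕ) (g : ℕ → ℝ) :
    ∑ μ ∈ Finset.Ico 1 m, g (m - μ) = ∑ μ ∈ Finset.Ico 1 m, g μ := by
  apply Finset.sum_nbij' (i := fun μ => m - μ) (j := fun μ => m - μ)
  · intro a ha
    simp only [Finset.mem_Ico] at ha ⊢
    omega
  · intro a ha
    simp only [Finset.mem_Ico] at ha ⊢
    omega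
  · intro a ha
    simp only [Finset.mem_Ico] at ha
    omega
  · intro a ha
    simp only [Finset.mem_Ico] at ha
    omega
  · intro a ha
    rfl

lemma sum_g_le (D : ℝ) (m h : ℕ) (hm : 1 ≤ m) (hh : 1 ≤ h) :
    ∑ t ∈ Finset.Ico 1 m, min (D^2 * (h:ℝ)^2) (D^2 * ((h:ℝ)^2)⁻¹ * (m:ℝ)^4 * ((t:ℝ)^4)⁻¹)
      ≤ (7/3) * D^2 * m * ((h:ℝ)^2)⁻¹ * min ((m:ℝ)^3) ((h:ℝ)^3) := by
  have hm0 : (0:ℝ) < m := by exact_mod_cast hm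
  have hh0 : (0:ℝ) < h := by exact_mod_cast hh
  rcases le_or_gt m h with hmh | hhm
  · have hmhr : (m:ℝ) ≤ h := by exact_mod_cast hmh
    have hmin : min ((m:ℝ)^3) ((h:ℝ)^3) = (m:ℝ)^3 :=
      min_eq_left (pow_le_pow_left₀ hm0.le hmhr 3)
    rw [hmin]
    calc ∑ t ∈ Finset.Ico 1 m, min (D^2 * (h:ℝ)^2) (D^2 * ((h:ℝ)^2)⁻¹ * (m:ℝ)^4 * ((t:ℝ)^4)⁻¹)
        ≤ ∑ t ∈ Finset.Ico 1 m, D^2 * ((h:ℝ)^2)⁻¹ * (m:ℝ)^4 * ((t:ℝ)^4)⁻¹ :=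
          Finset.sum_le_sum (fun t _ => min_le_right _ _)
      _ = D^2 * ((h:ℝ)^2)⁻¹ * (m:ℝ)^4 * ∑ t ∈ Finset.Ico 1 m, ((t:ℝ)^4)⁻¹ := by
          rw [Finset.mul_sum]
      _ ≤ D^2 * ((h:ℝ)^2)⁻¹ * (m:ℝ)^4 * (4/3) :=
          mul_le_mul_of_nonneg_left (sum_inv_pow4_le m) (by positivity)
      _ ≤ (7/3) * D^2 * m * ((h:ℝ)^2)⁻¹ * (m:ℝ)^3 := by
          have h4 : (m:ℝ)^4 = (m:ℝ) * (m:ℝ)^3 := by ring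
          nlinarith [mul_nonneg (mul_nonneg (sq_nonneg D) (by positivity : (0:ℝ) ≤ ((h:ℝ)^2)⁻¹))
            (by positivity : (0:ℝ) ≤ (m:ℝ)^4)]
  · have hhmr : (h:ℝ) ≤ m := by exact_mod_cast hhm.le
    have hmin : min ((m:ℝ)^3) ((h:ℝ)^3) = (h:ℝ)^3 :=
      min_eq_right (pow_le_pow_left₀ hh0.le hhmr 3)
    rw [hmin]
    set T : ℕ := m / h + 1 with hTdef
    have hT1 : 1 ≤ T := Nat.le_add_left 1 (m/h)
    have hTm : (m:ℝ) < (T:ℝ) * h := by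
      have := Nat.div_add_mod m h
      have hmod : m % h < h := Nat.mod_lt m (by omega)
      have : m < T * h := by
        rw [hTdef]
        calc m = h * (m/h) + m % h := (Nat.div_add_mod m h).symm
          _ < h * (m/h) + h := by omega
          _ = (m/h + 1) * h := by ring
      exact_mod_cast this
    have hTh2m : (T:ℝ) * h ≤ 2 * m := by
      have h1 : (m/h) * h ≤ m := Nat.div_mul_le_self m h
      have : T * h ≤ 2 * m := by
        rw [hTdef]
        have heq : (m/h + 1) * h = (m/h)*h + h := by ring
        omega
      exact_mod_cast this
    rw [← Finset.sum_filter_add_sum_filter_not (Finset.Ico 1 m) (fun t => t ≤ T)]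
    have S1 : ∑ t ∈ (Finset.Ico 1 m).filter (fun t => t ≤ T),
        min (D^2 * (h:ℝ)^2) (D^2 * ((h:ℝ)^2)⁻¹ * (m:ℝ)^4 * ((t:ℝ)^4)⁻¹)
        ≤ 2 * D^2 * m * h := by
      calc ∑ t ∈ (Finset.Ico 1 m).filter (fun t => t ≤ T),
          min (D^2 * (h:ℝ)^2) (D^2 * ((h:ℝ)^2)⁻¹ * (m:ℝ)^4 * ((t:ℝ)^4)⁻¹)
          ≤ ∑ _t ∈ (Finset.Ico 1 m).filter (fun t => t ≤ T), D^2 * (h:ℝ)^2 :=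
            Finset.sum_le_sum (fun t _ => min_le_left _ _)
        _ = (((Finset.Ico 1 m).filter (fun t => t ≤ T)).card : ℝ) * (D^2 * (h:ℝ)^2) := by
            rw [Finset.sum_const, nsmul_eq_mul]
        _ ≤ (T:ℝ) * (D^2 * (h:ℝ)^2) := by
            apply mul_le_mul_of_nonneg_right _ (by positivity)
            have hsub : (Finset.Ico 1 m).filter (fun t => t ≤ T) ⊆ Finset.Ico 1 (T+1) := by
              intro t ht
              simp only [Finset.mem_filter, Finset.mem_Ico] at ht ⊢
              omega
            have := Finset.card_le_card hsub
            have hcard : (Finset.Ico 1 (T+1)).card = T := by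
              rw [Nat.card_Ico]; omega
            exact_mod_cast le_trans this (le_of_eq hcard)
        _ ≤ 2 * D^2 * m * h := by
            nlinarith [mul_le_mul_of_nonneg_right hTh2m
              (mul_nonneg (sq_nonneg D) hh0.le)]
    have S2 : ∑ t ∈ (Finset.Ico 1 m).filter (fun t => ¬ t ≤ T),
        min (D^2 * (h:ℝ)^2) (D^2 * ((h:ℝ)^2)⁻¹ * (m:ℝ)^4 * ((t:ℝ)^4)⁻¹)
        ≤ (1/3) * D^2 * m * h := by
      have hsub : (Finset.Ico 1 m).filter (fun t => ¬ t ≤ T) ⊆ Finset.Ico (T+1) m := by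
        intro t ht
        simp only [Finset.mem_filter, Finset.mem_Ico] at ht ⊢
        omega
      calc ∑ t ∈ (Finset.Ico 1 m).filter (fun t => ¬ t ≤ T),
          min (D^2 * (h:ℝ)^2) (D^2 * ((h:ℝ)^2)⁻¹ * (m:ℝ)^4 * ((t:ℝ)^4)⁻¹)
          ≤ ∑ t ∈ (Finset.Ico 1 m).filter (fun t => ¬ t ≤ T),
            D^2 * ((h:ℝ)^2)⁻¹ * (m:ℝ)^4 * ((t:ℝ)^4)⁻¹ :=
            Finset.sum_le_sum (fun t _ => min_le_right _ _)
        _ ≤ ∑ t ∈ Finset.Ico (T+1) m, D^2 * ((h:ℝ)^2)⁻¹ * (m:ℝ)^4 * ((t:ℝ)^4)⁻¹ :=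
            Finset.sum_le_sum_of_subset_of_nonneg hsub (fun t _ _ => by positivity)
        _ = D^2 * ((h:ℝ)^2)⁻¹ * (m:ℝ)^4 * ∑ t ∈ Finset.Ico (T+1) m, ((t:ℝ)^4)⁻¹ := by
            rw [Finset.mul_sum]
        _ ≤ D^2 * ((h:ℝ)^2)⁻¹ * (m:ℝ)^4 * ((1/3) * ((T:ℝ)^3)⁻¹) :=
            mul_le_mul_of_nonneg_left (telescope_sum T m hT1) (by positivity)
        _ ≤ (1/3) * D^2 * m * h := by
            have hT0 : (0:ℝ) < T := by exact_mod_cast hT1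
            have hTinv : ((T:ℝ)^3)⁻¹ ≤ ((h:ℝ)/m)^3 := by
              have hmT : (m:ℝ)/h ≤ T := by
                rw [div_le_iff₀ hh0]
                linarith
              have hmh0 : (0:ℝ) < (m:ℝ)/h := by positivity
              have hcube : ((m:ℝ)/h)^3 ≤ (T:ℝ)^3 := by
                apply pow_le_pow_left₀ (le_of_lt hmh0) hmT
              calc ((T:ℝ)^3)⁻¹ ≤ (((m:ℝ)/h)^3)⁻¹ := by
                    apply inv_anti₀ (by positivity) hcube
                _ = ((h:ℝ)/m)^3 := by
                    rw [← inv_pow, inv_div]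
            calc D^2 * ((h:ℝ)^2)⁻¹ * (m:ℝ)^4 * ((1/3) * ((T:ℝ)^3)⁻¹)
                ≤ D^2 * ((h:ℝ)^2)⁻¹ * (m:ℝ)^4 * ((1/3) * ((h:ℝ)/m)^3) := by
                  apply mul_le_mul_of_nonneg_left _ (by positivity)
                  apply mul_le_mul_of_nonneg_left hTinv (by norm_num)
              _ = (1/3) * D^2 * m * h := by
                  field_simp
    have hfin : ((h:ℝ)^2)⁻¹ * (h:ℝ)^3 = h := by
      field_simp
    calc _ ≤ 2 * D^2 * m * h + (1/3) * D^2 * m * h := add_le_add S1 S2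
      _ = (7/3) * D^2 * (m:ℝ) * (((h:ℝ)^2)⁻¹ * (h:ℝ)^3) := by rw [hfin]; ring
      _ = (7/3) * D^2 * m * ((h:ℝ)^2)⁻¹ * (h:ℝ)^3 := by ring

theorem stmt_9 (f₁ f₂ : ℝ → ℂ)
    (hs₁ : ContDiff ℝ (⊤ : ℕ∞) f₁) (hs₂ : ContDiff ℝ (⊤ : ℕ∞) f₂)
    (hc₁ : HasCompactSupport f₁) (hc₂ : HasCompactSupport f₂)
    (C : ℝ)
    (hd₁ : ∀ ξ : ℝ, ξ ≠ 0 → ‖𝓕 f₁ ξ‖ ≤ C * |ξ| ^ (-2 : ℝ))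
    (hd₂ : ∀ ξ : ℝ, ξ ≠ 0 → ‖𝓕 f₂ ξ‖ ≤ C * |ξ| ^ (-2 : ℝ)) :
    ∃ K : ℝ, ∀ m h : ℕ, 1 ≤ m → 1 ≤ h →
      ‖∑ μ ∈ Finset.Ico 1 m, Efh f₁ h ((μ : ℝ) / m) * Efh f₂ h ((μ : ℝ) / m)‖
        ≤ K * m * (h : ℝ) ^ (-2 : ℝ) * min ((m : ℝ) ^ 3) ((h : ℝ) ^ 3) := by
  have hC0 : 0 ≤ C := by
    have h1 := hd₁ 1 one_ne_zero
    simp only [abs_one, Real.one_rpow, mul_one] at h1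
    exact le_trans (norm_nonneg _) h1
  obtain ⟨D₁, hD₁0, hD₁⟩ := trivial_bound f₁ hs₁.continuous hc₁
  obtain ⟨D₂, hD₂0, hD₂⟩ := trivial_bound f₂ hs₂.continuous hc₂
  set P : ℝ := C * (3 + 4 * c₀) with hPdef
  have hP0 : 0 ≤ P := mul_nonneg hC0 (by nlinarith [c₀_nonneg])
  set D : ℝ := max 1 (max D₁ (max D₂ P)) with hDdef
  have hD0 : (0:ℝ) ≤ D := le_trans zero_le_one (le_max_left _ _)
  have hDD₁ : D₁ ≤ D := le_trans (le_max_left _ _) (le_max_right _ _)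
  have hDD₂ : D₂ ≤ D := le_trans (le_trans (le_max_left _ _) (le_max_right _ _)) (le_max_right _ _)
  have hDP : P ≤ D := le_trans (le_trans (le_max_right _ _) (le_max_right _ _)) (le_max_right _ _)
  refine ⟨2 * ((7/3) * D^2), fun m h hm hh => ?_⟩
  have hm0 : (0:ℝ) < m := by exact_mod_cast hm
  have hh0 : (0:ℝ) < h := by exact_mod_cast hh
  set G : ℕ → ℝ := fun t =>
    min (D^2 * (h:ℝ)^2) (D^2 * ((h:ℝ)^2)⁻¹ * (m:ℝ)^4 * ((t:ℝ)^4)⁻¹) with hGdef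
  have hG0 : ∀ t : ℕ, 0 ≤ G t := by
    intro t
    apply le_min (by positivity) (by positivity)
  have key : ∀ μ ∈ Finset.Ico 1 m,
      ‖Efh f₁ h ((μ : ℝ) / m) * Efh f₂ h ((μ : ℝ) / m)‖ ≤ G μ + G (m - μ) := by
    intro μ hμ
    simp only [Finset.mem_Ico] at hμ
    obtain ⟨hμ1, hμm⟩ := hμ
    set α : ℝ := (μ:ℝ)/m with hαdef
    have hα0 : 0 < α := by
      apply div_pos _ hm0
      exact_mod_cast hμ1
    have hα1 : α < 1 := by
      rw [hαdef, div_lt_one hm0]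
      exact_mod_cast hμm
    set t : ℕ := min μ (m - μ) with htdef
    have ht1 : 1 ≤ t := by omega
    have ht0 : (0:ℝ) < t := by exact_mod_cast ht1
    have hδt : min α (1 - α) = (t:ℝ)/m := by
      have e1 : 1 - α = ((m:ℝ) - μ)/m := by
        rw [hαdef]
        field_simp
      rw [e1, hαdef, min_div_div_right hm0.le]
      congr 1
      rw [htdef]
      have : ((m - μ : ℕ):ℝ) = (m:ℝ) - μ := by
        rw [Nat.cast_sub hμm.le]
      rw [Nat.cast_min, this]
    -- the two bounds for each factor
    have hb₁t : ‖Efh f₁ h α‖ ≤ D * h :=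
      le_trans (hD₁ h hh α) (mul_le_mul_of_nonneg_right hDD₁ hh0.le)
    have hb₂t : ‖Efh f₂ h α‖ ≤ D * h :=
      le_trans (hD₂ h hh α) (mul_le_mul_of_nonneg_right hDD₂ hh0.le)
    have hb₁p : ‖Efh f₁ h α‖ ≤ D * (h:ℝ)⁻¹ * ((min α (1-α))^2)⁻¹ := by
      refine le_trans (poisson_bound f₁ hs₁.continuous hc₁ C hC0 hd₁ h hh α hα0 hα1) ?_
      apply mul_le_mul_of_nonneg_right _ (by positivity)
      exact mul_le_mul_of_nonneg_right hDP (by positivity)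
    have hb₂p : ‖Efh f₂ h α‖ ≤ D * (h:ℝ)⁻¹ * ((min α (1-α))^2)⁻¹ := by
      refine le_trans (poisson_bound f₂ hs₂.continuous hc₂ C hC0 hd₂ h hh α hα0 hα1) ?_
      apply mul_le_mul_of_nonneg_right _ (by positivity)
      exact mul_le_mul_of_nonneg_right hDP (by positivity)
    have hprod : ‖Efh f₁ h α * Efh f₂ h α‖ ≤ G t := by
      rw [norm_mul]
      apply le_min
      · calc ‖Efh f₁ h α‖ * ‖Efh f₂ h α‖ ≤ (D * h) * (D * h) :=
            mul_le_mul hb₁t hb₂t (norm_nonneg _) (by positivity)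
          _ = D^2 * (h:ℝ)^2 := by ring
      · calc ‖Efh f₁ h α‖ * ‖Efh f₂ h α‖
            ≤ (D * (h:ℝ)⁻¹ * ((min α (1-α))^2)⁻¹) * (D * (h:ℝ)⁻¹ * ((min α (1-α))^2)⁻¹) :=
            mul_le_mul hb₁p hb₂p (norm_nonneg _) (by positivity)
          _ = D^2 * ((h:ℝ)^2)⁻¹ * (m:ℝ)^4 * ((t:ℝ)^4)⁻¹ := by
              rw [hδt]
              field_simp
    have hGt : G t ≤ G μ + G (m - μ) := by
      rcases le_total μ (m - μ) with hcase | hcase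
      · have : t = μ := by omega
        rw [this]
        have := hG0 (m - μ)
        linarith
      · have : t = m - μ := by omega
        rw [this]
        have := hG0 μ
        linarith
    exact le_trans hprod hGt
  calc ‖∑ μ ∈ Finset.Ico 1 m, Efh f₁ h ((μ : ℝ) / m) * Efh f₂ h ((μ : ℝ) / m)‖
      ≤ ∑ μ ∈ Finset.Ico 1 m, ‖Efh f₁ h ((μ : ℝ) / m) * Efh f₂ h ((μ : ℝ) / m)‖ :=
        norm_sum_le _ _
    _ ≤ ∑ μ ∈ Finset.Ico 1 m, (G μ + G (m - μ)) := Finset.sum_le_sum key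
    _ = ∑ μ ∈ Finset.Ico 1 m, G μ + ∑ μ ∈ Finset.Ico 1 m, G (m - μ) :=
        Finset.sum_add_distrib
    _ = 2 * ∑ μ ∈ Finset.Ico 1 m, G μ := by
        rw [sum_reflect m G]
        ring
    _ ≤ 2 * ((7/3) * D^2 * m * ((h:ℝ)^2)⁻¹ * min ((m:ℝ)^3) ((h:ℝ)^3)) := by
        apply mul_le_mul_of_nonneg_left _ (by norm_num)
        exact sum_g_le D m h hm hh
    _ = 2 * ((7/3) * D^2) * m * (h:ℝ) ^ (-2:ℝ) * min ((m:ℝ)^3) ((h:ℝ)^3) := by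
        rw [rpow_neg_two_eq hh0.le]
        ring
end

section
/- For fixed r ≥ 1, a squarefree q ≥ 1, and residue classes c₁, c₂ mod r, the quantity V₂(q,h;r,c₁,c₂) = Σ_{1 < d | q, (d,r)=1} (μ(d)²/φ(d)²) Σ_{1 ≤ a ≤ d, (a,d)=1} E_{r,c₁}(a/d) E_{r,c₂}(−a/d) satisfies V₂(q,h;r,c₁,c₂) ≪_r h · q/φ(q). -/
open scoped BigOperators Real

/-- `E_{r,c}(α) = Σ_{1 ≤ m ≤ h, m ≡ c (mod r)} e(mα)`. -/
noncomputable def Erc (r : ℕ) (c : ZMod r) (h : ℕ) (α : ℝ) : ℂ :=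
  ∑ m ∈ (Finset.Icc 1 h).filter (fun m => (Nat.cast m : ZMod r) = c), e ((m : ℝ) * α)

/-- `V₂(q,h;r,c₁,c₂) = Σ_{1<d|q, (d,r)=1} (μ(d)²/φ(d)²) Σ_{1≤a≤d,(a,d)=1}
E_{r,c₁}(a/d) E_{r,c₂}(−a/d)`. -/
noncomputable def V2 (q h r : ℕ) (c₁ c₂ : ZMod r) : ℂ :=
  ∑ d ∈ q.divisors.filter (fun d => 1 < d ∧ Nat.Coprime d r),
    ((ArithmeticFunction.moebius d : ℂ) ^ 2 / (Nat.totient d : ℂ) ^ 2) *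
      ∑ a ∈ (Finset.Icc 1 d).filter (fun a => Nat.Coprime a d),
        Erc r c₁ h ((a : ℝ) / d) * Erc r c₂ h (-(a : ℝ) / d)


/-!
By AM–GM each inner sum over `a` is at most the mean of the two sums
`∑_{(a,d)=1} |E_{r,c}(a/d)|²`. By Parseval over `ℤ/dℤ`, the full sum over all `a mod d` equals
`d` times the number of pairs `m ≡ m' (mod d)` from the progression `P = {m ≤ h : m ≡ c (mod r)}`.
As `(d, r) = 1` such pairs are congruent mod `rd`, so there are at most `#P (h/(rd) + 1)` of them,
and `d ⌊h/(rd)⌋ ≤ ⌊h/r⌋ ≤ #P`. Removing the term `a = 0`, which is `#P²`, leaves at most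
`d #P ≤ h d`. Hence `|V₂| ≤ h ∑_{d ∣ q} d/φ(d)²`, and for squarefree `q` this Euler product is
`q/φ(q) ∏_{p ∣ q} (1 + 1/(p(p-1))) ≤ e² q/φ(q)`.
-/

open Finset ComplexConjugate ArithmeticFunction

lemma e_add (x y : ℝ) : e (x + y) = e x * e y := by
  simp only [e, Complex.ofReal_add, mul_add, Complex.exp_add]

lemma e_natCast_mul (k : ℕ) (x : ℝ) : e (k * x) = e x ^ k := by
  rw [e, e, ← Complex.exp_nat_mul]
  push_cast
  ring_nf

lemma conj_e (x : ℝ) : conj (e x) = e (-x) := by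
  rw [e, e, ← Complex.exp_conj]
  simp only [map_mul, Complex.conj_I, Complex.conj_ofReal, map_ofNat, Complex.ofReal_neg]
  ring_nf

lemma e_eq_one_iff (x : ℝ) : e x = 1 ↔ ∃ k : ℤ, x = k := by
  rw [e, Complex.exp_eq_one_iff]
  have h2πI : 2 * (π : ℂ) * Complex.I ≠ 0 := by simp [Real.pi_ne_zero]
  refine exists_congr fun k => ?_
  rw [mul_comm _ (x : ℂ), mul_left_inj' h2πI]
  exact_mod_cast Iff.rfl

lemma sum_range_e_mul_div (d : ℕ) (hd : d ≠ 0) (n : ℤ) :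
    ∑ a ∈ range d, e (n * a / d) = if (d : ℤ) ∣ n then (d : ℂ) else 0 := by
  have hpow : ∀ a : ℕ, e (n * a / d) = e (n / d) ^ a := fun a => by
    rw [← e_natCast_mul]; ring_nf
  simp_rw [hpow]
  have hd' : (d : ℝ) ≠ 0 := Nat.cast_ne_zero.mpr hd
  have hroot : e (n / d) = 1 ↔ (d : ℤ) ∣ n := by
    rw [e_eq_one_iff]
    refine ⟨fun ⟨k, hk⟩ => ⟨k, ?_⟩, fun ⟨k, hk⟩ => ⟨k, ?_⟩⟩
    · rw [div_eq_iff hd'] at hk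
      exact_mod_cast hk.trans (mul_comm _ _)
    · rw [hk]; push_cast; field_simp
  split_ifs with hdvd
  · simp [hroot.mpr hdvd]
  · rw [geom_sum_eq (mt hroot.mp hdvd), ← e_natCast_mul, mul_div_cancel₀ _ hd',
      (e_eq_one_iff _).mpr ⟨n, rfl⟩, sub_self, zero_div]

noncomputable def expSum (S : Finset ℕ) (α : ℝ) : ℂ := ∑ m ∈ S, e (m * α)

section expSum

variable (S : Finset ℕ)

lemma expSum_zero : expSum S 0 = #S := by
  simp [expSum, e]

lemma expSum_neg (α : ℝ) : expSum S (-α) = conj (expSum S α) := by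
  simp only [expSum, map_sum, conj_e, mul_neg]

lemma norm_expSum_neg (α : ℝ) : ‖expSum S (-α)‖ = ‖expSum S α‖ := by
  rw [expSum_neg, RCLike.norm_conj]

lemma sum_range_norm_sq_expSum (d : ℕ) (hd : d ≠ 0) :
    ∑ a ∈ range d, ‖expSum S (a / d)‖ ^ 2 = d * ∑ m ∈ S, (#{m' ∈ S | m' ≡ m [MOD d]} : ℝ) := by
  have hterm : ∀ a : ℕ, (‖expSum S (a / d)‖ ^ 2 : ℂ)
      = ∑ m ∈ S, ∑ m' ∈ S, e (((m : ℤ) - m' : ℤ) * a / d) := fun a => by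
    rw [← Complex.mul_conj', ← expSum_neg, expSum, expSum, sum_mul_sum]
    refine sum_congr rfl fun m _ => sum_congr rfl fun m' _ => ?_
    rw [← e_add]
    push_cast
    ring_nf
  apply Complex.ofReal_injective
  push_cast
  simp_rw [hterm]
  rw [sum_comm, mul_sum]
  refine sum_congr rfl fun m _ => ?_
  rw [sum_comm]
  simp_rw [sum_range_e_mul_div d hd, ← Nat.modEq_iff_dvd, sum_ite, sum_const_zero, add_zero,
    sum_const, nsmul_eq_mul, mul_comm]

lemma sum_coprime_norm_sq_expSum_le (d : ℕ) (hd : 1 < d) :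
    ∑ a ∈ Icc 1 d with a.Coprime d, ‖expSum S (a / d)‖ ^ 2
      ≤ d * ∑ m ∈ S, (#{m' ∈ S | m' ≡ m [MOD d]} : ℝ) - #S ^ 2 := by
  have hsub : {a ∈ Icc 1 d | a.Coprime d} ⊆ (range d).erase 0 := fun a ha => by
    simp only [mem_filter, mem_Icc] at ha
    have had : a ≠ d := by
      rintro rfl
      simp only [Nat.coprime_self] at ha
      omega
    simp only [mem_erase, mem_range]
    omega
  calc ∑ a ∈ Icc 1 d with a.Coprime d, ‖expSum S (a / d)‖ ^ 2
      ≤ ∑ a ∈ (range d).erase 0, ‖expSum S (a / d)‖ ^ 2 :=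
        sum_le_sum_of_subset_of_nonneg hsub fun _ _ _ => by positivity
    _ = _ := by
        rw [sum_erase_eq_sub (mem_range.mpr (by omega)), sum_range_norm_sq_expSum S d (by omega)]
        simp [expSum_zero]

end expSum

lemma card_Icc_filter_modEq_le (k v h : ℕ) : #{m ∈ Icc 1 h | m ≡ v [MOD k]} ≤ h / k + 1 := by
  simpa using card_le_card_of_injOn (t := range (h / k + 1)) (· / k)
    (fun m hm => by
      simp only [coe_filter, mem_Icc, Set.mem_ofPred_eq] at hm
      simpa [Nat.lt_succ_iff] using Nat.div_le_div_right hm.1.2)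
    (fun m hm m' hm' (hdiv : m / k = m' / k) => by
      simp only [coe_filter, mem_Icc, Set.mem_ofPred_eq] at hm hm'
      rw [← Nat.div_add_mod m k, ← Nat.div_add_mod m' k, hdiv, hm.2.trans hm'.2.symm])

def progression (r : ℕ) (c : ZMod r) (h : ℕ) : Finset ℕ :=
  {m ∈ Icc 1 h | ((m : ℕ) : ZMod r) = c}

lemma Erc_eq_expSum (r : ℕ) (c : ZMod r) (h : ℕ) : Erc r c h = expSum (progression r c h) := rfl

lemma le_card_progression (r : ℕ) (c : ZMod r) (h : ℕ) : h / r ≤ #(progression r c h) := by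
  obtain rfl | hr := eq_or_ne r 0
  · simp
  have : NeZero r := ⟨hr⟩
  -- the least positive representative of `c`
  set v := (c - 1).val + 1
  have hv : v ≤ r := (c - 1).val_lt
  simpa using card_le_card_of_injOn (s := range (h / r)) (fun j => v + r * j)
    (fun j hj => by
      simp only [coe_range, Set.mem_Iio] at hj
      simp only [progression, coe_filter, mem_Icc, Set.mem_ofPred_eq]
      refine ⟨⟨by omega, ?_⟩, by simp [v]⟩
      calc v + r * j ≤ r * (j + 1) := by rw [mul_add]; omega
        _ ≤ r * (h / r) := Nat.mul_le_mul_left r hj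
        _ ≤ h := Nat.mul_div_le h r)
    (fun j _ j' _ hjj => Nat.eq_of_mul_eq_mul_left (Nat.pos_of_ne_zero hr) (by simpa using hjj))

section progression

variable {r d : ℕ} (c : ZMod r) (h : ℕ)

lemma card_progression_le : #(progression r c h) ≤ h :=
  (card_filter_le _ _).trans (Nat.card_Icc 1 h).le

lemma card_progression_filter_modEq_le (hdr : d.Coprime r) {m : ℕ} (hm : m ∈ progression r c h) :
    #{m' ∈ progression r c h | m' ≡ m [MOD d]} ≤ h / (r * d) + 1 := by
  refine le_trans (card_le_card fun m' hm' => ?_) (card_Icc_filter_modEq_le (r * d) m h)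
  simp only [progression, mem_filter] at hm hm' ⊢
  have hmodr : m' ≡ m [MOD r] := (ZMod.natCast_eq_natCast_iff m' m r).mp (hm'.1.2.trans hm.2.symm)
  exact ⟨hm'.1.1, (Nat.modEq_and_modEq_iff_modEq_mul hdr.symm).mp ⟨hmodr, hm'.2⟩⟩

lemma mul_sum_card_progression_filter_modEq_le (hdr : d.Coprime r) :
    d * ∑ m ∈ progression r c h, #{m' ∈ progression r c h | m' ≡ m [MOD d]}
      ≤ #(progression r c h) * (#(progression r c h) + d) := by
  set P := progression r c h
  have hblocks : d * (h / (r * d)) ≤ #P := by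
    rw [← Nat.div_div_eq_div_mul]
    exact (Nat.mul_div_le _ d).trans (le_card_progression r c h)
  calc d * ∑ m ∈ P, #{m' ∈ P | m' ≡ m [MOD d]} ≤ d * (#P * (h / (r * d) + 1)) := by
        gcongr
        exact sum_le_card_nsmul _ _ _ fun m hm => card_progression_filter_modEq_le c h hdr hm
    _ ≤ #P * (#P + d) := by nlinarith

end progression

lemma sum_coprime_norm_sq_Erc_le (r : ℕ) (c : ZMod r) (h : ℕ) {d : ℕ} (hd : 1 < d)
    (hdr : d.Coprime r) :
    ∑ a ∈ Icc 1 d with a.Coprime d, ‖Erc r c h (a / d)‖ ^ 2 ≤ h * d := by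
  rw [Erc_eq_expSum]
  set P := progression r c h
  have hcount : (d : ℝ) * ∑ m ∈ P, (#{m' ∈ P | m' ≡ m [MOD d]} : ℝ) ≤ #P * (#P + d) := by
    exact_mod_cast mul_sum_card_progression_filter_modEq_le c h hdr
  have hP : (#P : ℝ) ≤ h := by exact_mod_cast card_progression_le c h
  calc ∑ a ∈ Icc 1 d with a.Coprime d, ‖expSum P (a / d)‖ ^ 2
      ≤ d * ∑ m ∈ P, (#{m' ∈ P | m' ≡ m [MOD d]} : ℝ) - #P ^ 2 :=
        sum_coprime_norm_sq_expSum_le P d hd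
    _ ≤ h * d := by nlinarith

lemma norm_sum_mul_le_half_add {ι R : Type*} [NormedRing R] (s : Finset ι) (f g : ι → R) :
    ‖∑ i ∈ s, f i * g i‖ ≤ (∑ i ∈ s, ‖f i‖ ^ 2 + ∑ i ∈ s, ‖g i‖ ^ 2) / 2 := by
  rw [← sum_add_distrib, sum_div]
  refine (norm_sum_le _ _).trans (sum_le_sum fun i _ => (norm_mul_le _ _).trans ?_)
  nlinarith [sq_nonneg (‖f i‖ - ‖g i‖)]

lemma norm_sum_coprime_Erc_mul_Erc_neg_le (r : ℕ) (c₁ c₂ : ZMod r) (h : ℕ) {d : ℕ} (hd : 1 < d)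
    (hdr : d.Coprime r) :
    ‖∑ a ∈ Icc 1 d with a.Coprime d, Erc r c₁ h (a / d) * Erc r c₂ h (-a / d)‖ ≤ h * d := by
  refine (norm_sum_mul_le_half_add _ _ _).trans ?_
  simp_rw [neg_div]
  have h₁ := sum_coprime_norm_sq_Erc_le r c₁ h hd hdr
  have h₂ := sum_coprime_norm_sq_Erc_le r c₂ h hd hdr
  simp only [Erc_eq_expSum, norm_expSum_neg] at h₁ h₂ ⊢
  linarith

namespace ArithmeticFunction

noncomputable def natDivTotient : ArithmeticFunction ℝ := ⟨fun n => n / n.totient, by simp⟩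

noncomputable def natDivTotientSq : ArithmeticFunction ℝ := ⟨fun n => n / n.totient ^ 2, by simp⟩

@[simp]
lemma natDivTotient_apply (n : ℕ) : natDivTotient n = n / n.totient := rfl

@[simp]
lemma natDivTotientSq_apply (n : ℕ) : natDivTotientSq n = n / n.totient ^ 2 := rfl

lemma isMultiplicative_natDivTotient : natDivTotient.IsMultiplicative :=
  ⟨by simp, fun hmn => by simp [Nat.totient_mul hmn, mul_div_mul_comm]⟩

lemma isMultiplicative_natDivTotientSq : natDivTotientSq.IsMultiplicative :=
  ⟨by simp, fun hmn => by simp [Nat.totient_mul hmn, mul_pow, mul_div_mul_comm]⟩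

end ArithmeticFunction

lemma one_add_natDivTotientSq_le {p : ℕ} (hp : p.Prime) :
    1 + natDivTotientSq p ≤ natDivTotient p * (1 + 2 * ((p : ℝ) ^ 2)⁻¹) := by
  have hp2 : (2 : ℝ) ≤ p := by exact_mod_cast hp.two_le
  simp only [natDivTotientSq_apply, natDivTotient_apply, Nat.totient_prime hp,
    Nat.cast_sub hp.one_le, Nat.cast_one]
  have hp1 : (0 : ℝ) < p - 1 := by linarith
  have hfactor : 1 + (p : ℝ) / (p - 1) ^ 2 = p / (p - 1) * (1 + ((p : ℝ) * (p - 1))⁻¹) := by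
    field_simp
    ring
  rw [hfactor]
  gcongr
  rw [inv_le_iff_one_le_mul₀ (by positivity)]
  field_simp
  linarith

lemma sum_inv_sq_primeFactors_le (q : ℕ) : ∑ p ∈ q.primeFactors, ((p : ℝ) ^ 2)⁻¹ ≤ 1 := by
  have hsub : q.primeFactors ⊆ Ioo 1 (q + 1) := fun p hp => mem_Ioo.mpr
    ⟨(Nat.prime_of_mem_primeFactors hp).one_lt,
      Nat.lt_succ_of_le (Nat.le_of_mem_primeFactors hp)⟩
  calc ∑ p ∈ q.primeFactors, ((p : ℝ) ^ 2)⁻¹ ≤ ∑ i ∈ Ioo 1 (q + 1), ((i : ℝ) ^ 2)⁻¹ :=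
        sum_le_sum_of_subset_of_nonneg hsub fun _ _ _ => by positivity
    _ ≤ 2 / ((1 : ℕ) + 1) := sum_Ioo_inv_sq_le 1 (q + 1)
    _ = 1 := by norm_num

lemma sum_divisors_div_totient_sq_le {q : ℕ} (hq : Squarefree q) :
    ∑ d ∈ q.divisors, (d : ℝ) / d.totient ^ 2 ≤ Real.exp 2 * (q / q.totient) := by
  have hprod := isMultiplicative_natDivTotientSq.prodPrimeFactors_one_add_of_squarefree hq
  simp only [natDivTotientSq_apply] at hprod
  rw [← hprod, ← natDivTotient_apply, ← isMultiplicative_natDivTotient.prod_primeFactors hq,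
    mul_comm]
  calc ∏ p ∈ q.primeFactors, (1 + natDivTotientSq p)
      ≤ ∏ p ∈ q.primeFactors, natDivTotient p * (1 + 2 * ((p : ℝ) ^ 2)⁻¹) :=
        prod_le_prod (fun _ _ => by rw [natDivTotientSq_apply]; positivity)
          fun p hp => one_add_natDivTotientSq_le (Nat.prime_of_mem_primeFactors hp)
    _ ≤ (∏ p ∈ q.primeFactors, natDivTotient p) * Real.exp 2 := by
        rw [prod_mul_distrib]
        gcongr
        · exact prod_nonneg fun _ _ => by rw [natDivTotient_apply]; positivity
        · refine (Real.prod_one_add_le_exp_sum _ fun _ => by positivity).trans ?_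
          rw [Real.exp_le_exp, ← mul_sum]
          linarith [sum_inv_sq_primeFactors_le q]

lemma norm_moebius_sq_div_totient_sq_le (d : ℕ) :
    ‖(moebius d : ℂ) ^ 2 / (d.totient : ℂ) ^ 2‖ ≤ ((d.totient : ℝ) ^ 2)⁻¹ := by
  have hμ : ‖(moebius d : ℂ)‖ ≤ 1 := by
    rw [Complex.norm_intCast, ← Int.cast_abs]
    exact_mod_cast abs_moebius_le_one
  rw [norm_div, norm_pow, norm_pow, Complex.norm_natCast, div_eq_mul_inv]
  exact mul_le_of_le_one_left (by positivity) (pow_le_one₀ (norm_nonneg _) hμ)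

theorem stmt_14_general (r : ℕ) :
    ∃ K : ℝ, ∀ q h : ℕ, Squarefree q → 1 ≤ h → ∀ c₁ c₂ : ZMod r,
      ‖V2 q h r c₁ c₂‖ ≤ K * h * q / Nat.totient q := by
  refine ⟨Real.exp 2, fun q h hq _ c₁ c₂ => ?_⟩
  have hterm : ∀ d ∈ q.divisors.filter (fun d => 1 < d ∧ d.Coprime r),
      ‖(moebius d : ℂ) ^ 2 / (d.totient : ℂ) ^ 2 *
          ∑ a ∈ Icc 1 d with a.Coprime d, Erc r c₁ h (a / d) * Erc r c₂ h (-a / d)‖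
        ≤ h * ((d : ℝ) / d.totient ^ 2) := fun d hd => by
    obtain ⟨-, hd, hdr⟩ := mem_filter.mp hd
    rw [norm_mul, mul_div, mul_comm, div_eq_mul_inv]
    exact mul_le_mul (norm_sum_coprime_Erc_mul_Erc_neg_le r c₁ c₂ h hd hdr)
      (norm_moebius_sq_div_totient_sq_le d) (norm_nonneg _) (by positivity)
  calc ‖V2 q h r c₁ c₂‖
      ≤ ∑ d ∈ q.divisors.filter (fun d => 1 < d ∧ d.Coprime r), h * ((d : ℝ) / d.totient ^ 2) :=
        (norm_sum_le _ _).trans (sum_le_sum hterm)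
    _ ≤ h * ∑ d ∈ q.divisors, (d : ℝ) / d.totient ^ 2 := by
        rw [mul_sum]
        exact sum_le_sum_of_subset_of_nonneg (filter_subset _ _) fun _ _ _ => by positivity
    _ ≤ h * (Real.exp 2 * (q / q.totient)) := by
        gcongr
        exact sum_divisors_div_totient_sq_le hq
    _ = Real.exp 2 * h * q / q.totient := by ring

theorem stmt_14 (r : ℕ) (hr : 1 ≤ r) :
    ∃ K : ℝ, ∀ q h : ℕ, Squarefree q → 1 ≤ h → ∀ c₁ c₂ : ZMod r,
      ‖V2 q h r c₁ c₂‖ ≤ K * h * q / Nat.totient q :=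
  stmt_14_general r
end
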